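/- There exists a constant C > 0 such that for every positive integer n, the n-th generic stabilizer rank satisfies χ_n ≤ C·2^{n/2}. -/

import Mathlib

open scoped BigOperators Classical

noncomputable section

namespace StabPaper

/-- The space `𝔽₂ⁿ` of length-`n` bitstrings. -/
abbrev F2 (n : ℕ) := Fin n → ZMod 2

/-- `A ⊆ 𝔽₂ⁿ` is a (nonempty) affine linear subspace. -/
def IsAffineSubspace {n : ℕ} (A : Set (F2 n)) : Prop :=
  A.Nonempty ∧ ∀ x ∈ A, ∀ y ∈ A, ∀ z ∈ A, x + y + z ∈ A

/-- `l : 𝔽₂ⁿ → 𝔽₂` is a linear form. -/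
def IsLinearForm {n : ℕ} (l : F2 n → ZMod 2) : Prop :=
  ∀ x y, l (x + y) = l x + l y

/-- `q : 𝔽₂ⁿ → 𝔽₂` is a quadratic form (polynomial of degree at most 2
with vanishing constant term). -/
def IsQuadraticForm {n : ℕ} (q : F2 n → ZMod 2) : Prop :=
  q 0 = 0 ∧ ∀ x y z, q (x + y + z) = q (x + y) + q (x + z) + q (y + z) + q x + q y + q z

/-- A stabilizer state vector on `n` qubits. -/
def IsStabilizerState {n : ℕ} (σ : F2 n → ℂ) : Prop :=
  ∃ (A : Set (F2 n)) (l q : F2 n → ZMod 2),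
    IsAffineSubspace A ∧ IsLinearForm l ∧ IsQuadraticForm q ∧
    ∀ x, σ x = if x ∈ A then Complex.I ^ (l x).val * (-1 : ℂ) ^ (q x).val else 0

/-- A real stabilizer state vector on `n` qubits (the case `l = 0`). -/
def IsRealStabilizerState {n : ℕ} (σ : F2 n → ℂ) : Prop :=
  ∃ (A : Set (F2 n)) (q : F2 n → ZMod 2),
    IsAffineSubspace A ∧ IsQuadraticForm q ∧
    ∀ x, σ x = if x ∈ A then (-1 : ℂ) ^ (q x).val else 0

/-- The stabilizer rank: the least `r` such that `ψ` is a `ℂ`-linear combination of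
`r` stabilizer state vectors. -/
def stabRank {n : ℕ} (ψ : F2 n → ℂ) : ℕ :=
  sInf {r : ℕ | ∃ (c : Fin r → ℂ) (σ : Fin r → (F2 n → ℂ)),
    (∀ i, IsStabilizerState (σ i)) ∧ ψ = ∑ i, c i • σ i}

/-- The real stabilizer rank: the least `r` such that `ψ` is a `ℂ`-linear combination of
`r` real stabilizer state vectors. -/
def realStabRank {n : ℕ} (ψ : F2 n → ℂ) : ℕ :=
  sInf {r : ℕ | ∃ (c : Fin r → ℂ) (σ : Fin r → (F2 n → ℂ)),
    (∀ i, IsRealStabilizerState (σ i)) ∧ ψ = ∑ i, c i • σ i}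

/-- The `n`-fold tensor power of a one-qubit vector `ψ : ℂ²`. -/
def tensorPow (ψ : ZMod 2 → ℂ) (n : ℕ) : F2 n → ℂ := fun x => ∏ i, ψ (x i)

/-- The Euclidean norm on `ℂ^{𝔽₂ⁿ}`. -/
def l2norm {n : ℕ} (φ : F2 n → ℂ) : ℝ := Real.sqrt (∑ x, ‖φ x‖ ^ 2)

/-- The δ-approximate stabilizer rank. -/
def approxStabRank {n : ℕ} (δ : ℝ) (ψ : F2 n → ℂ) : ℕ :=
  sInf {r : ℕ | ∃ φ : F2 n → ℂ, φ ≠ 0 ∧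
    l2norm (fun x => ((l2norm φ : ℝ) : ℂ)⁻¹ * φ x - ((l2norm ψ : ℝ) : ℂ)⁻¹ * ψ x) < δ ∧
    stabRank φ = r}

/-- The one-qubit vector `a·e₀ + b·e₁ ∈ ℂ²`. -/
def qubit (a b : ℂ) : ZMod 2 → ℂ := fun x => if x = 0 then a else b

/-- A nonzero `ψ ∈ ℂ²` is a one-qubit stabilizer state vector iff it is proportional to
one of `e₀, e₁, e₀+e₁, e₀−e₁, e₀+i·e₁, e₀−i·e₁`. -/
def IsQubitStabVec (ψ : ZMod 2 → ℂ) : Prop :=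
  ∃ c : ℂ, c ≠ 0 ∧ (ψ = c • qubit 1 0 ∨ ψ = c • qubit 0 1 ∨ ψ = c • qubit 1 1 ∨
    ψ = c • qubit 1 (-1) ∨ ψ = c • qubit 1 Complex.I ∨ ψ = c • qubit 1 (-Complex.I))

/-- The `n`-th generic stabilizer rank `χ_n`. -/
def genStabRank (n : ℕ) : ℕ :=
  sSup {r : ℕ | ∃ ψ : ZMod 2 → ℂ, ψ ≠ 0 ∧ stabRank (tensorPow ψ n) = r}

/-- The `n`-th generic real stabilizer rank `χ_nℝ`. -/
def genRealStabRank (n : ℕ) : ℕ :=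
  sSup {r : ℕ | ∃ ψ : ZMod 2 → ℂ, ψ ≠ 0 ∧ realStabRank (tensorPow ψ n) = r}


/-!
For `ψ = a·e₀ + b·e₁` the value `ψ^{⊗6}(x) = a^{6-|x|} b^{|x|}` depends only on the Hamming
weight `|x|`. The product states `(e₀ + iᵏ·e₁)^{⊗6}`, with values `i^{k|x|}`, span the functions
of `|x| mod 4`; the basis vectors at `000000` and `111111`, together with two stabilizer states
supported on the odd-weight vectors whose sum takes the values `2, 0, -2` at weights `1, 3, 5`,
separate the weights `0, 4`, `2, 6` and `1, 5`. Hence `χ(ψ^{⊗6}) ≤ 8`. Since stabilizer states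
are closed under tensor products, `χ(ψ^{⊗n}) ≤ 8^{⌊n/6⌋} 2^{n mod 6} ≤ 8·2^{n/2}`.
-/

open Complex (I I_sq)

lemma zmod_two_cases (u : ZMod 2) : u = 0 ∨ u = 1 := by
  revert u
  decide

namespace IsLinearForm

variable {m n : ℕ} {l l' : F2 n → ZMod 2}

lemma map_zero (hl : IsLinearForm l) : l 0 = 0 := by
  simpa using hl 0 0

lemma add (hl : IsLinearForm l) (hl' : IsLinearForm l') : IsLinearForm (l + l') := by
  intro x y
  simp only [Pi.add_apply, hl x y, hl' x y]
  ring

lemma comp (hl : IsLinearForm l) (f : F2 m →+ F2 n) : IsLinearForm (l ∘ f) := by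
  intro x y
  simp only [Function.comp_apply, map_add, hl (f x)]

lemma isQuadraticForm (hl : IsLinearForm l) : IsQuadraticForm l := by
  refine ⟨hl.map_zero, fun x y z => ?_⟩
  simp only [show ∀ x y, l (x + y) = l x + l y from hl]
  ring_nf
  reduce_mod_char

lemma isQuadraticForm_mul (hl : IsLinearForm l) (hl' : IsLinearForm l') :
    IsQuadraticForm (l * l') := by
  refine ⟨by simp [hl.map_zero], fun x y z => ?_⟩
  simp only [Pi.mul_apply, show ∀ x y, l (x + y) = l x + l y from hl,
    show ∀ x y, l' (x + y) = l' x + l' y from hl']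
  ring_nf
  reduce_mod_char

end IsLinearForm

namespace IsQuadraticForm

variable {m n : ℕ} {q q' : F2 n → ZMod 2}

lemma add (hq : IsQuadraticForm q) (hq' : IsQuadraticForm q') : IsQuadraticForm (q + q') := by
  refine ⟨by simp [hq.1, hq'.1], fun x y z => ?_⟩
  simp only [Pi.add_apply, hq.2 x y z, hq'.2 x y z]
  ring

lemma comp (hq : IsQuadraticForm q) (f : F2 m →+ F2 n) : IsQuadraticForm (q ∘ f) :=
  ⟨by simp [hq.1], fun x y z => by simp only [Function.comp_apply, map_add, hq.2]⟩

end IsQuadraticForm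

lemma phase_mul (u v s t : ZMod 2) :
    (I ^ u.val * (-1) ^ s.val) * (I ^ v.val * (-1) ^ t.val) =
      I ^ (u + v).val * (-1) ^ (s + t + u * v).val := by
  have h : (1 + 1 : ZMod 2) = 0 := rfl
  rcases zmod_two_cases u with rfl | rfl <;> rcases zmod_two_cases v with rfl | rfl <;>
    rcases zmod_two_cases s with rfl | rfl <;> rcases zmod_two_cases t with rfl | rfl <;>
    simp [h, ZMod.val_one]

lemma isStabilizerState_phase {n : ℕ} {l q : F2 n → ZMod 2} (hl : IsLinearForm l)
    (hq : IsQuadraticForm q) : IsStabilizerState fun x => I ^ (l x).val * (-1) ^ (q x).val :=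
  ⟨Set.univ, l, q, ⟨Set.univ_nonempty, fun _ _ _ _ _ _ => trivial⟩, hl, hq,
    fun _ => (if_pos trivial).symm⟩

lemma isStabilizerState_single {n : ℕ} (y : F2 n) : IsStabilizerState (Pi.single y 1) := by
  refine ⟨{y}, 0, 0, ⟨⟨y, rfl⟩, ?_⟩, fun _ _ => by simp, ⟨rfl, fun _ _ _ => by simp⟩,
    fun x => ?_⟩
  · rintro x rfl y rfl z rfl
    simp [ZModModule.add_self]
  · by_cases h : x = y <;> simp [h]

lemma stabRank_le_card {n : ℕ} {ι : Type*} [Fintype ι] {ψ : F2 n → ℂ} (c : ι → ℂ)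
    (σ : ι → F2 n → ℂ) (hσ : ∀ i, IsStabilizerState (σ i)) (hψ : ψ = ∑ i, c i • σ i) :
    stabRank ψ ≤ Fintype.card ι := by
  let e := (Fintype.equivFin ι).symm
  exact Nat.sInf_le ⟨c ∘ e, σ ∘ e, fun i => hσ (e i), hψ.trans (e.sum_comp _).symm⟩

lemma stabRank_le_two_pow {n : ℕ} (ψ : F2 n → ℂ) : stabRank ψ ≤ 2 ^ n := by
  simpa using stabRank_le_card _ _ isStabilizerState_single (pi_eq_sum_univ' ψ)

lemma exists_sum_eq_of_stabRank {n : ℕ} (ψ : F2 n → ℂ) :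
    ∃ (c : Fin (stabRank ψ) → ℂ) (σ : Fin (stabRank ψ) → F2 n → ℂ),
      (∀ i, IsStabilizerState (σ i)) ∧ ψ = ∑ i, c i • σ i := by
  let e := (Fintype.equivFin (F2 n)).symm
  exact Nat.sInf_mem (s := {r | ∃ (c : Fin r → ℂ) (σ : Fin r → F2 n → ℂ),
      (∀ i, IsStabilizerState (σ i)) ∧ ψ = ∑ i, c i • σ i}) ⟨_, fun i => ψ (e i),
    fun i => Pi.single (e i) 1, fun _ => isStabilizerState_single _,
    (pi_eq_sum_univ' ψ).trans (e.sum_comp _).symm⟩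

def tensor {p q : ℕ} (f : F2 p → ℂ) (g : F2 q → ℂ) (x : F2 (p + q)) : ℂ :=
  f (x ∘ Fin.castAdd q) * g (x ∘ Fin.natAdd p)

lemma IsAffineSubspace.append {p q : ℕ} {A : Set (F2 p)} {B : Set (F2 q)}
    (hA : IsAffineSubspace A) (hB : IsAffineSubspace B) :
    IsAffineSubspace {x : F2 (p + q) | x ∘ Fin.castAdd q ∈ A ∧ x ∘ Fin.natAdd p ∈ B} := by
  obtain ⟨⟨a, ha⟩, hA⟩ := hA
  obtain ⟨⟨b, hb⟩, hB⟩ := hB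
  refine ⟨⟨Fin.append a b, ?_, ?_⟩, fun x hx y hy z hz =>
    ⟨hA _ hx.1 _ hy.1 _ hz.1, hB _ hx.2 _ hy.2 _ hz.2⟩⟩
  · simpa [Function.comp_def] using ha
  · simpa [Function.comp_def] using hb

lemma IsStabilizerState.tensor {p q : ℕ} {σ : F2 p → ℂ} {τ : F2 q → ℂ}
    (hσ : IsStabilizerState σ) (hτ : IsStabilizerState τ) : IsStabilizerState (tensor σ τ) := by
  obtain ⟨A, l, s, hA, hl, hs, hσ⟩ := hσ
  obtain ⟨B, l', s', hB, hl', hs', hτ⟩ := hτ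
  let L := LinearMap.funLeft (ZMod 2) (ZMod 2) (Fin.castAdd q : Fin p → Fin (p + q))
  let R := LinearMap.funLeft (ZMod 2) (ZMod 2) (Fin.natAdd p : Fin q → Fin (p + q))
  have hlL := hl.comp L.toAddMonoidHom
  have hlR := hl'.comp R.toAddMonoidHom
  -- the cross term `l · l'` comes from `i^l · i^{l'} = i^{l+l'} (-1)^{l l'}` (`phase_mul`)
  refine ⟨_, l ∘ L + l' ∘ R, s ∘ L + s' ∘ R + (l ∘ L) * (l' ∘ R), hA.append hB, hlL.add hlR,
    ((hs.comp L.toAddMonoidHom).add (hs'.comp R.toAddMonoidHom)).add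
      (hlL.isQuadraticForm_mul hlR), fun x => ?_⟩
  have hL : L x = x ∘ Fin.castAdd q := rfl
  have hR : R x = x ∘ Fin.natAdd p := rfl
  simp only [StabPaper.tensor, hσ, hτ, Function.comp_apply, Pi.add_apply, Pi.mul_apply, hL, hR]
  split_ifs <;> simp_all [phase_mul]

lemma stabRank_tensor_le {p q : ℕ} (f : F2 p → ℂ) (g : F2 q → ℂ) :
    stabRank (tensor f g) ≤ stabRank f * stabRank g := by
  obtain ⟨c, σ, hσ, hf⟩ := exists_sum_eq_of_stabRank f
  obtain ⟨d, τ, hτ, hg⟩ := exists_sum_eq_of_stabRank g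
  have hsum : tensor f g =
      ∑ ij : Fin _ × Fin _, (c ij.1 * d ij.2) • tensor (σ ij.1) (τ ij.2) := by
    ext x
    conv_lhs => rw [hf, hg]
    simp only [tensor, Finset.sum_apply, Pi.smul_apply, smul_eq_mul, Fintype.sum_prod_type,
      Finset.sum_mul_sum]
    exact Finset.sum_congr rfl fun i _ => Finset.sum_congr rfl fun j _ => by ring
  simpa using stabRank_le_card _ _ (fun ij : Fin _ × Fin _ => (hσ ij.1).tensor (hτ ij.2)) hsum

lemma tensorPow_add (ψ : ZMod 2 → ℂ) (p q : ℕ) :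
    tensorPow ψ (p + q) = tensor (tensorPow ψ p) (tensorPow ψ q) :=
  funext fun x => Fin.prod_univ_add fun i => ψ (x i)

lemma tensorPow_one (ψ : ZMod 2 → ℂ) : tensorPow ψ 1 = fun x => ψ (x 0) :=
  funext fun x => Fin.prod_univ_one fun i => ψ (x i)

lemma stabRank_tensorPow_add_le (ψ : ZMod 2 → ℂ) (p q : ℕ) :
    stabRank (tensorPow ψ (p + q)) ≤ stabRank (tensorPow ψ p) * stabRank (tensorPow ψ q) := by
  rw [tensorPow_add]
  exact stabRank_tensor_le _ _

lemma stabRank_tensorPow_mul_le (ψ : ZMod 2 → ℂ) (m k : ℕ) :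
    stabRank (tensorPow ψ (m * k)) ≤ stabRank (tensorPow ψ m) ^ k := by
  induction k with
  | zero => simpa using stabRank_le_two_pow (tensorPow ψ 0)
  | succ k ih =>
    calc stabRank (tensorPow ψ (m * (k + 1)))
        ≤ stabRank (tensorPow ψ (m * k)) * stabRank (tensorPow ψ m) :=
          stabRank_tensorPow_add_le ψ _ _
      _ ≤ stabRank (tensorPow ψ m) ^ k * stabRank (tensorPow ψ m) := by gcongr
      _ = stabRank (tensorPow ψ m) ^ (k + 1) := (pow_succ _ _).symm

lemma isStabilizerState_tensorPow {ψ : ZMod 2 → ℂ}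
    (hψ : IsStabilizerState fun x : F2 1 => ψ (x 0)) (n : ℕ) :
    IsStabilizerState (tensorPow ψ n) := by
  induction n with
  | zero =>
    convert isStabilizerState_phase (n := 0) (l := 0) (q := 0) (fun _ _ => by simp)
      ⟨rfl, fun _ _ _ => by simp⟩ using 2
    simp [tensorPow]
  | succ n ih =>
    rw [tensorPow_add]
    exact ih.tensor (by rwa [tensorPow_one])

lemma isStabilizerState_qubit_phase (u v : ZMod 2) :
    IsStabilizerState fun x : F2 1 => qubit 1 (I ^ u.val * (-1) ^ v.val) (x 0) := by
  have hlin : ∀ w : ZMod 2, IsLinearForm fun x : F2 1 => w * x 0 := fun w x y => mul_add _ _ _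
  convert isStabilizerState_phase (hlin u) (hlin v).isQuadraticForm using 2 with x
  rcases zmod_two_cases (x 0) with h | h <;> simp [qubit, h]

lemma isStabilizerState_qubit_basis (c : ZMod 2) :
    IsStabilizerState fun x : F2 1 => if x 0 = c then 1 else 0 := by
  refine ⟨{x | x 0 = c}, 0, 0, ⟨⟨fun _ => c, rfl⟩, ?_⟩, fun _ _ => by simp,
    ⟨rfl, fun _ _ _ => by simp⟩, fun x => by simp⟩
  intro x hx y hy z hz
  simp_all [ZModModule.add_self]

lemma qubit_zero_one : qubit 0 1 = fun y => if y = 1 then 1 else 0 := by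
  funext y
  rcases zmod_two_cases y with rfl | rfl <;> simp [qubit]

lemma tensorPow_qubit_apply (a b : ℂ) {n : ℕ} (x : F2 n) :
    tensorPow (qubit a b) n x = a ^ (n - hammingNorm x) * b ^ hammingNorm x := by
  have hcard : (Finset.univ.filter fun i => x i = 0).card = n - hammingNorm x := by
    have := Finset.card_filter_add_card_filter_not (s := Finset.univ) fun i => x i = 0
    simp only [Finset.card_univ, Fintype.card_fin] at this
    exact Nat.eq_sub_of_add_eq this
  simp only [tensorPow, qubit, Finset.prod_ite, Finset.prod_const, hcard, hammingNorm]

def parity {n : ℕ} (x : F2 n) : ZMod 2 := ∑ i, x i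

def oddParityState {n : ℕ} (q : F2 n → ZMod 2) (x : F2 n) : ℂ :=
  if parity x = 1 then (-1) ^ (q x).val else 0

lemma isStabilizerState_oddParityState {n : ℕ} (hn : n ≠ 0) {q : F2 n → ZMod 2}
    (hq : IsQuadraticForm q) : IsStabilizerState (oddParityState q) := by
  refine ⟨{x | parity x = 1}, 0, q, ⟨⟨Pi.single ⟨0, Nat.pos_of_ne_zero hn⟩ 1, ?_⟩, ?_⟩,
    fun _ _ => by simp, hq, fun x => by simp [oddParityState]⟩
  · simp [parity]
  · intro x hx y hy z hz
    simp only [Set.mem_ofPred_eq, parity, Pi.add_apply, Finset.sum_add_distrib] at hx hy hz ⊢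
    rw [hx, hy, hz]
    decide

def quadA (x : F2 6) : ZMod 2 := x 0 * x 1 + x 0 * x 2 + x 1 * x 2

def quadB (x : F2 6) : ZMod 2 := (x 0 + x 1 + x 2) * (x 3 + x 4) + x 3 * x 4

lemma isQuadraticForm_quadA : IsQuadraticForm quadA := by
  refine ⟨by simp [quadA], fun x y z => ?_⟩
  simp only [quadA, Pi.add_apply]
  ring_nf
  reduce_mod_char

lemma isQuadraticForm_quadB : IsQuadraticForm quadB := by
  refine ⟨by simp [quadB], fun x y z => ?_⟩
  simp only [quadB, Pi.add_apply]
  ring_nf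
  reduce_mod_char

lemma oddParityState_quadA_add_quadB (x : F2 6) :
    oddParityState quadA x + oddParityState quadB x =
      if hammingNorm x = 1 then 2 else if hammingNorm x = 5 then -2 else 0 := by
  -- checked over all of `𝔽₂⁶`, with values in `ℤ` so that the equality is decidable
  have key : ∀ x : F2 6, (if parity x = 1 then (-1 : ℤ) ^ (quadA x).val + (-1) ^ (quadB x).val
      else 0) = if hammingNorm x = 1 then 2 else if hammingNorm x = 5 then -2 else 0 := by
    decide
  have hx := congrArg (Int.cast : ℤ → ℂ) (key x)
  unfold oddParityState
  split_ifs at hx ⊢ <;> push_cast at hx <;> linear_combination hx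

def sixQubitStates : Fin 8 → F2 6 → ℂ :=
  ![tensorPow (qubit 1 1) 6, tensorPow (qubit 1 I) 6, tensorPow (qubit 1 (-1)) 6,
    tensorPow (qubit 1 (-I)) 6, tensorPow (qubit 1 0) 6, tensorPow (qubit 0 1) 6,
    oddParityState quadA, oddParityState quadB]

/-- The first four coefficients are the discrete Fourier coefficients on `ℤ/4` of the weight
profile `g` at the representatives `m₀, m₁, m₂, m₃` of the residues mod 4; the last four correct
the values at the weights `0`, `6` and `1, 5`. -/
def sixQubitCoeffs (a b : ℂ) : Fin 8 → ℂ :=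
  let g : ℕ → ℂ := fun w => a ^ (6 - w) * b ^ w
  let m₀ := g 4; let m₁ := (g 1 + g 5) / 2; let m₂ := g 2; let m₃ := g 3
  ![(m₀ + m₁ + m₂ + m₃) / 4, (m₀ - I * m₁ - m₂ + I * m₃) / 4, (m₀ - m₁ + m₂ - m₃) / 4,
    (m₀ + I * m₁ - m₂ - I * m₃) / 4, g 0 - g 4, g 6 - g 2, (g 1 - g 5) / 4, (g 1 - g 5) / 4]

lemma tensorPow_qubit_six_eq (a b : ℂ) :
    tensorPow (qubit a b) 6 = ∑ i, sixQubitCoeffs a b i • sixQubitStates i := by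
  ext x
  have hodd := oddParityState_quadA_add_quadB x
  simp only [Finset.sum_apply, Fin.sum_univ_eight, Pi.smul_apply, smul_eq_mul, sixQubitStates,
    sixQubitCoeffs, Matrix.cons_val, tensorPow_qubit_apply]
  have hw : hammingNorm x ≤ 6 := hammingNorm_le_card_fintype
  generalize hammingNorm x = w at *
  interval_cases w <;> grind [I_sq]

lemma isStabilizerState_sixQubitStates (i : Fin 8) : IsStabilizerState (sixQubitStates i) := by
  have hphase u v := isStabilizerState_tensorPow (isStabilizerState_qubit_phase u v) 6
  have hbasis c := isStabilizerState_tensorPow (ψ := fun y => if y = c then 1 else 0)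
    (isStabilizerState_qubit_basis c) 6
  fin_cases i <;> simp only [sixQubitStates, Fin.reduceFinMk, Matrix.cons_val]
  · simpa using hphase 0 0
  · simpa [ZMod.val_one] using hphase 1 0
  · simpa [ZMod.val_one] using hphase 0 1
  · simpa [ZMod.val_one] using hphase 1 1
  · exact hbasis 0
  · simpa [qubit_zero_one] using hbasis 1
  · exact isStabilizerState_oddParityState (by norm_num) isQuadraticForm_quadA
  · exact isStabilizerState_oddParityState (by norm_num) isQuadraticForm_quadB

lemma stabRank_tensorPow_six_le (ψ : ZMod 2 → ℂ) : stabRank (tensorPow ψ 6) ≤ 8 := by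
  have hψ : qubit (ψ 0) (ψ 1) = ψ := by
    funext y
    rcases zmod_two_cases y with rfl | rfl <;> simp [qubit]
  simpa [hψ] using stabRank_le_card _ _ isStabilizerState_sixQubitStates
    (tensorPow_qubit_six_eq (ψ 0) (ψ 1))

lemma stabRank_tensorPow_le (ψ : ZMod 2 → ℂ) (n : ℕ) :
    stabRank (tensorPow ψ n) ≤ 8 ^ (n / 6) * 2 ^ (n % 6) :=
  calc stabRank (tensorPow ψ n) = stabRank (tensorPow ψ (6 * (n / 6) + n % 6)) := by
        rw [Nat.div_add_mod]
    _ ≤ stabRank (tensorPow ψ (6 * (n / 6))) * stabRank (tensorPow ψ (n % 6)) :=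
        stabRank_tensorPow_add_le ψ _ _
    _ ≤ stabRank (tensorPow ψ 6) ^ (n / 6) * 2 ^ (n % 6) :=
        Nat.mul_le_mul (stabRank_tensorPow_mul_le ψ 6 _) (stabRank_le_two_pow _)
    _ ≤ 8 ^ (n / 6) * 2 ^ (n % 6) := by gcongr; exact stabRank_tensorPow_six_le ψ

lemma genStabRank_le (n : ℕ) : genStabRank n ≤ 8 ^ (n / 6) * 2 ^ (n % 6) :=
  csSup_le' fun _ ⟨ψ, _, hr⟩ => hr ▸ stabRank_tensorPow_le ψ n

lemma eight_pow_div_mul_two_pow_mod_le (n : ℕ) :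
    ((8 ^ (n / 6) * 2 ^ (n % 6) : ℕ) : ℝ) ≤ 8 * (2 : ℝ) ^ ((n : ℝ) / 2) := by
  obtain ⟨q, r, hr, rfl⟩ : ∃ q r, r < 6 ∧ n = 6 * q + r :=
    ⟨n / 6, n % 6, Nat.mod_lt n (by norm_num), (Nat.div_add_mod n 6).symm⟩
  have hqr : (6 * q + r) / 6 = q ∧ (6 * q + r) % 6 = r := by omega
  have hexp : ((3 * q + r : ℕ) : ℝ) ≤ 3 + ((6 * q + r : ℕ) : ℝ) / 2 := by
    have : ((2 * (3 * q + r) : ℕ) : ℝ) ≤ ((6 + (6 * q + r) : ℕ) : ℝ) := by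
      exact_mod_cast (by omega)
    push_cast at this ⊢
    linarith
  calc ((8 ^ ((6 * q + r) / 6) * 2 ^ ((6 * q + r) % 6) : ℕ) : ℝ)
      = (2 : ℝ) ^ ((3 * q + r : ℕ) : ℝ) := by
        rw [Real.rpow_natCast, hqr.1, hqr.2, pow_add, pow_mul]
        norm_num
    _ ≤ (2 : ℝ) ^ (3 + ((6 * q + r : ℕ) : ℝ) / 2) :=
        Real.rpow_le_rpow_of_exponent_le (by norm_num) hexp
    _ = 8 * (2 : ℝ) ^ (((6 * q + r : ℕ) : ℝ) / 2) := by
        rw [Real.rpow_add two_pos]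
        norm_num

/-- There is a constant `C > 0` with `χ_n ≤ C·2^{n/2}` for every positive integer `n`. -/
theorem genStabRank_upper_bound :
    ∃ C : ℝ, 0 < C ∧ ∀ n : ℕ, 1 ≤ n →
      (genStabRank n : ℝ) ≤ C * (2 : ℝ) ^ ((n : ℝ) / 2) :=
  ⟨8, by norm_num, fun n _ =>
    (Nat.cast_le.mpr (genStabRank_le n)).trans (eight_pow_div_mul_two_pow_mod_le n)⟩

end StabPaper
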